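/- Let b be odd and let w = Φ⁻¹((1b)^ω) be the infinite smooth word over {1 < b} with Φ(w) = (1b)^ω (the minimal smooth word). Then every maximal block of b's in w has length 1. -/
import Mathlib


/-- Strict lexicographic order on infinite words. -/
def InfLex {α : Type*} [LT α] (u v : ℕ → α) : Prop :=
  ∃ k, (∀ j < k, u j = v j) ∧ u k < v k

/-- An infinite word is an infinite Lyndon word if it is lexicographically smaller
than all of its proper suffixes. -/
def IsInfLyndon {α : Type*} [LT α] (w : ℕ → α) : Prop :=
  ∀ i, 0 < i → InfLex w (fun n => w (n + i))

/-- Partial sums of an infinite sequence of block lengths. -/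
def psum (u : ℕ → ℕ) : ℕ → ℕ
  | 0 => 0
  | k + 1 => psum u k + u k

/-- The index of the maximal block containing position `n` in the word whose block
lengths are given by `u`. -/
def blockIdx (u : ℕ → ℕ) (n : ℕ) : ℕ :=
  Nat.findGreatest (fun k => psum u k ≤ n) n

/-- `expand x y u` is the infinite word `x^{u 0} y^{u 1} x^{u 2} ⋯` whose run-length
encoding is `u` and whose letters alternate between `x` and `y`, starting with `x`;
i.e. the pseudo-inverse `Δ⁻¹_x(u)` over the alphabet `{x, y}`. -/
def expand (x y : ℕ) (u : ℕ → ℕ) (n : ℕ) : ℕ :=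
  if blockIdx u n % 2 = 0 then x else y

/-- `SmoothChain a b W` says that `W k` is the sequence of iterated run-length
encodings `Δᵏ(W 0)` over the alphabet `{a, b}`: each `W k` is a word over `{a, b}`
and is recovered from its run-length encoding `W (k+1)` by alternating expansion
starting with its own first letter. -/
def SmoothChain (a b : ℕ) (W : ℕ → ℕ → ℕ) : Prop :=
  ∀ k, (∀ n, W k n = a ∨ W k n = b) ∧
    W k = expand (W k 0) (if W k 0 = a then b else a) (W (k + 1))

/-- An infinite word `w` is smooth over `{a, b}` if all its iterated run-length
encodings `Δᵏ(w)` are infinite words over `{a, b}`. -/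
def IsSmooth (a b : ℕ) (w : ℕ → ℕ) : Prop :=
  ∃ W : ℕ → ℕ → ℕ, W 0 = w ∧ SmoothChain a b W

lemma psum_succ (u : ℕ → ℕ) (k : ℕ) : psum u (k + 1) = psum u k + u k := rfl

lemma psum_parity (u : ℕ → ℕ) (hu : ∀ i, u i % 2 = 1) (j : ℕ) :
    psum u j % 2 = j % 2 := by
  induction j with
  | zero => rfl
  | succ j ih => have := hu j; rw [psum_succ]; omega

lemma le_psum (u : ℕ → ℕ) (hu : ∀ i, 1 ≤ u i) (j : ℕ) : j ≤ psum u j := by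
  induction j with
  | zero => exact Nat.zero_le _
  | succ j ih => have := hu j; rw [psum_succ]; omega

lemma psum_mono (u : ℕ → ℕ) : ∀ {a c : ℕ}, a ≤ c → psum u a ≤ psum u c := by
  intro a c h
  induction c with
  | zero => simp_all
  | succ c ih =>
    rcases Nat.eq_or_lt_of_le h with rfl | h'
    · exact le_rfl
    · have := ih (by omega); rw [psum_succ]; omega

lemma psum_blockIdx_le (u : ℕ → ℕ) (n : ℕ) : psum u (blockIdx u n) ≤ n :=
  Nat.findGreatest_spec (P := fun k => psum u k ≤ n) (Nat.zero_le n) (by simp [psum])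

lemma blockIdx_le (u : ℕ → ℕ) (n : ℕ) : blockIdx u n ≤ n :=
  Nat.findGreatest_le (P := fun k => psum u k ≤ n) n

lemma lt_psum_blockIdx_succ (u : ℕ → ℕ) (hu : ∀ i, 1 ≤ u i) (n : ℕ) :
    n < psum u (blockIdx u n + 1) := by
  by_cases h : blockIdx u n + 1 ≤ n
  · have := Nat.findGreatest_is_greatest (P := fun k => psum u k ≤ n)
      (by unfold blockIdx; omega : Nat.findGreatest (fun k => psum u k ≤ n) n < blockIdx u n + 1) h
    omega
  · have h1 := blockIdx_le u n
    have h2 := le_psum u hu (blockIdx u n + 1)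
    omega

lemma key_lemma (b : ℕ) (hb : Odd b) (h1b : 1 < b)
    (W : ℕ → ℕ → ℕ) (hW : SmoothChain 1 b W)
    (hPhi : ∀ k, W k 0 = if k % 2 = 0 then 1 else b) :
    ∀ n k, 1 ≤ k → n % 2 = k % 2 → W k n = 1 := by
  obtain ⟨m, hm⟩ := hb
  intro n
  induction n using Nat.strong_induction_on with
  | _ n IH =>
    intro k hk hpar
    obtain ⟨_, hexp⟩ := hW k
    set u := W (k + 1) with hu
    have hub : ∀ i, u i = 1 ∨ u i = b := (hW (k + 1)).1
    have hu1 : ∀ i, 1 ≤ u i := fun i => by rcases hub i with h | h <;> omega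
    have huodd : ∀ i, u i % 2 = 1 := fun i => by rcases hub i with h | h <;> omega
    set j := blockIdx u n with hj
    have hj_le : j ≤ n := blockIdx_le u n
    have h1 : psum u j ≤ n := psum_blockIdx_le u n
    have h2 : n < psum u (j + 1) := lt_psum_blockIdx_succ u hu1 n
    have h2' : psum u (j + 1) = psum u j + u j := rfl
    have hpp : psum u j % 2 = j % 2 := psum_parity u huodd j
    have hjpar : j % 2 = k % 2 := by
      rcases hub j with hj1 | hjb
      · omega
      · by_contra hne
        rcases lt_or_eq_of_le hj_le with hlt | heq
        · have := IH j hlt (k + 1) (by omega) (by omega)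
          rw [← hu] at this
          omega
        · omega
    have hWn : W k n = if blockIdx u n % 2 = 0 then W k 0
        else if W k 0 = 1 then b else 1 := by
      conv_lhs => rw [hexp]
      rfl
    rw [hWn, ← hj]
    have hW0 := hPhi k
    rcases Nat.even_or_odd k with hke | hko
    · have hk0 : k % 2 = 0 := Nat.even_iff.mp hke
      rw [hk0] at hW0
      simp at hW0
      rw [if_pos (by omega), hW0]
    · have hk1 : k % 2 = 1 := Nat.odd_iff.mp hko
      rw [hk1] at hW0
      simp at hW0
      rw [if_neg (by omega), hW0, if_neg (by omega)]

/-- In the minimal smooth word `w = Φ⁻¹((1b)^ω)` over `{1 < b}` with `b` odd,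
every maximal block of `b`'s has length `1` (no two consecutive `b`'s). -/
theorem blocks_of_b_have_length_one (b : ℕ) (hb : Odd b) (h1b : 1 < b)
    (W : ℕ → ℕ → ℕ) (hW : SmoothChain 1 b W)
    (hPhi : ∀ k, W k 0 = if k % 2 = 0 then 1 else b) :
    ∀ n, ¬ (W 0 n = b ∧ W 0 (n + 1) = b) := by
  intro n ⟨hn, hn1⟩
  obtain ⟨_, hexp⟩ := hW 0
  set u := W 1 with hu
  have hub : ∀ i, u i = 1 ∨ u i = b := (hW 1).1
  have hu1 : ∀ i, 1 ≤ u i := fun i => by rcases hub i with h | h <;> omega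
  have hW00 : W 0 0 = 1 := by have := hPhi 0; simpa using this
  have hWval : ∀ m, W 0 m = if blockIdx u m % 2 = 0 then 1 else b := by
    intro m
    conv_lhs => rw [hexp]
    rw [hW00]
    simp [expand]
  set j := blockIdx u n with hj
  set j' := blockIdx u (n + 1) with hj'
  have hjo : j % 2 = 1 := by
    have := hWval n; rw [hn] at this
    by_contra h
    rw [if_pos (by omega)] at this; omega
  have hjo' : j' % 2 = 1 := by
    have := hWval (n + 1); rw [hn1] at this
    by_contra h
    rw [if_pos (by omega)] at this; omega
  have h1 : psum u j ≤ n := psum_blockIdx_le u n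
  have h2 : n < psum u (j + 1) := lt_psum_blockIdx_succ u hu1 n
  have h1' : psum u j' ≤ n + 1 := psum_blockIdx_le u (n + 1)
  have h2' : n + 1 < psum u (j' + 1) := lt_psum_blockIdx_succ u hu1 (n + 1)
  -- j ≤ j'
  have hle : j ≤ j' :=
    Nat.le_findGreatest (le_trans (blockIdx_le u n) (Nat.le_succ n)) (by omega)
  -- j' ≤ j + 1
  have hle' : j' ≤ j + 1 := by
    by_contra h
    have : j + 2 ≤ j' := by omega
    have hmono : psum u (j + 2) ≤ psum u j' := psum_mono u (by omega)
    have hps2 : psum u (j + 2) = psum u (j + 1) + u (j + 1) := rfl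
    have := hu1 (j + 1)
    omega
  have hjj : j' = j := by omega
  -- block j has length ≥ 2, so u j = b, but j is odd so W 1 j = 1
  have hujb : u j = b := by
    have hsj : psum u (j + 1) = psum u j + u j := rfl
    rcases hub j with h | h
    · rw [hjj] at h2'; omega
    · exact h
  have := key_lemma b hb h1b W hW hPhi j 1 le_rfl (by omega)
  rw [← hu] at this
  omega
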